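/- arXiv:2502.17872 — 6 statements merged into one kernel-verified Lean document; each statement's English description precedes it below -/
import Mathlib

section
/- For every class H of boolean functions on X, VCdim(H) ≥ ⌊log₂ VCdim(H⊥)⌋, where H⊥ is the dual class. -/
/-- A class of boolean functions `H` shatters a finite set `s` if every
subset of `s` is realized as the true-set of some member of `H` on `s`. -/
def ShattersFun {A : Type*} (H : Set (A → Bool)) (s : Finset A) : Prop :=
  ∀ t ⊆ s, ∃ h ∈ H, ∀ a ∈ s, (h a = true ↔ a ∈ t)

/-- The VC-dimension of a class of boolean functions, as an extended natural number. -/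
noncomputable def VCdimFun {A : Type*} (H : Set (A → Bool)) : ℕ∞ :=
  sSup {n : ℕ∞ | ∃ s : Finset A, ShattersFun H s ∧ (s.card : ℕ∞) = n}

/-- The dual class of `H`: each point `x` induces the function `h ↦ h x` on `H`. -/
def dualClass {X : Type*} (H : Set (X → Bool)) : Set ((↥H) → Bool) :=
  Set.range (fun x : X => fun h : ↥H => (h : X → Bool) x)

theorem stmt_4 {X : Type*} (H : Set (X → Bool)) (m : ℕ)
    (hdual : VCdimFun (dualClass H) = (m : ℕ∞)) :
    (Nat.log 2 m : ℕ∞) ≤ VCdimFun H := by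
  classical
  rcases Nat.lt_or_ge m 2 with hm | hm
  · have h0 : Nat.log 2 m = 0 := by interval_cases m <;> simp
    simp [h0]
  · set k := Nat.log 2 m with hk
    have h2k : 2 ^ k ≤ m := Nat.pow_log_le_self 2 (by omega)
    -- extract a shattered set of cardinality m
    obtain ⟨s, hs, hcard⟩ :
        ∃ s : Finset ↥H, ShattersFun (dualClass H) s ∧ s.card = m := by
      have hlt : ((m - 1 : ℕ) : ℕ∞) < VCdimFun (dualClass H) := by
        rw [hdual]; exact_mod_cast Nat.sub_lt (by omega) one_pos
      rw [VCdimFun] at hlt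
      obtain ⟨n, ⟨s, hs, hcards⟩, hn⟩ := lt_sSup_iff.mp hlt
      refine ⟨s, hs, ?_⟩
      have hle : (s.card : ℕ∞) ≤ (m : ℕ∞) := by
        rw [← hdual]; exact le_sSup ⟨s, hs, rfl⟩
      rw [← hcards] at hn
      have h1 : m - 1 < s.card := by exact_mod_cast hn
      have h2 : s.card ≤ m := by exact_mod_cast hle
      omega
    -- an injection from (Fin k → Bool) into s
    have hcardle : Fintype.card (Fin k → Bool) ≤ Fintype.card ↥s := by
      simp [Fintype.card_coe, hcard, h2k]
    obtain ⟨f⟩ := Function.Embedding.nonempty_of_card_le hcardle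
    set F : (Fin k → Bool) → ↥H := fun w => (f w : ↥H) with hF
    have hFinj : Function.Injective F := fun a b hab =>
      f.injective (Subtype.ext hab)
    have hFs : ∀ w, F w ∈ s := fun w => (f w).2
    set t : Fin k → Finset ↥H :=
      fun i => s.filter (fun h => ∃ w, F w = h ∧ w i = true) with ht
    have hmemt : ∀ w i, F w ∈ t i ↔ w i = true := by
      intro w i
      simp only [ht, Finset.mem_filter, hFs w, true_and]
      constructor
      · rintro ⟨w', hw', hwi⟩
        rwa [hFinj hw'] at hwi
      · exact fun h => ⟨w, rfl, h⟩
    have H1 : ∀ i : Fin k, ∃ x : X,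
        ∀ h ∈ s, ((h : X → Bool) x = true ↔ h ∈ t i) := by
      intro i
      obtain ⟨g, hg, hgp⟩ := hs (t i) (Finset.filter_subset _ _)
      obtain ⟨x, hx⟩ := hg
      refine ⟨x, fun h hh => ?_⟩
      have := hgp h hh
      rw [← this, ← hx]
    choose x hx using H1
    have hxinj : Function.Injective x := by
      intro i j hij
      by_contra hne
      set w : Fin k → Bool := fun l => decide (l = i) with hw
      have h1 : ((F w : ↥H) : X → Bool) (x i) = true := by
        rw [hx i (F w) (hFs w), hmemt]; simp [hw]
      have h2 : ((F w : ↥H) : X → Bool) (x j) = false := by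
        have := hx j (F w) (hFs w)
        rw [hmemt] at this
        simp only [hw] at this
        simp only [decide_eq_true_eq] at this
        cases hb : ((F w : ↥H) : X → Bool) (x j)
        · rfl
        · exact absurd (Ne.symm hne) (not_ne_iff.mpr (this.mp hb))
      rw [hij, h2] at h1
      exact Bool.false_ne_true h1
    set S : Finset X := Finset.image x Finset.univ with hS
    have hScard : S.card = k := by
      rw [hS, Finset.card_image_of_injective _ hxinj, Finset.card_univ,
        Fintype.card_fin]
    have hshat : ShattersFun H S := by
      intro u hu
      set w : Fin k → Bool := fun i => decide (x i ∈ u) with hw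
      refine ⟨((F w : ↥H) : X → Bool), (F w).2, ?_⟩
      intro a ha
      rw [hS, Finset.mem_image] at ha
      obtain ⟨i, -, rfl⟩ := ha
      rw [hx i (F w) (hFs w), hmemt]
      simp [hw]
    rw [VCdimFun]
    exact le_sSup ⟨S, hshat, by rw [hScard]⟩
end

section
/- Let V = {v₁,…,v_N} and let S be the set of all triples (v_i, v_j, v_{j+1}) with i < j < N. Then S is shattered by the class of hypotheses h_ρ(x,y,z) = sign(ρ(x,y) − ρ(x,z)) ranging over all symmetric distance functions ρ : V × V → ℝ. In particular the VC-dimension of this hypothesis class is at least binom(N−1, 2) = Ω(N²). -/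
/-- The set of triples `(vᵢ, vⱼ, vⱼ₊₁)` with `i < j` and `j + 1 < N` is shattered by the
hypotheses `h_ρ(x,y,z) = sign (ρ x y - ρ x z)` as `ρ` ranges over symmetric distance
functions: every sign pattern `σ` on these triples is realized by some symmetric `ρ`
(label `true` meaning `ρ vᵢ vⱼ < ρ vᵢ vⱼ₊₁`).  Since there are `(N-1).choose 2` such
triples, the VC-dimension of this class is at least `(N-1).choose 2 = Ω(N²)`. -/
theorem stmt_8 (N : ℕ) (hN : 3 ≤ N) (σ : ℕ → ℕ → Bool) :
    ∃ ρ : ℕ → ℕ → ℝ,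
      (∀ a b, ρ a b = ρ b a) ∧
      ∀ i j : ℕ, i < j → j + 1 < N →
        ((ρ i j < ρ i (j + 1)) ↔ σ i j = true) := by
  set f : ℕ → ℕ → ℝ := fun i j => ∑ k ∈ Finset.Ico (i+1) j, (if σ i k then (1:ℝ) else -1)
    with hf
  refine ⟨fun a b => f (min a b) (max a b), ?_, ?_⟩
  · intro a b; dsimp only; rw [min_comm, max_comm]
  · intro i j hij _
    have h1 : min i j = i := min_eq_left hij.le
    have h2 : max i j = j := max_eq_right hij.le
    have h3 : min i (j+1) = i := min_eq_left (by omega)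
    have h4 : max i (j+1) = j+1 := max_eq_right (by omega)
    simp only [h1, h2, h3, h4, hf]
    rw [Finset.sum_Ico_succ_top (by omega : i+1 ≤ j)]
    by_cases h : σ i j <;> simp [h]
end

section
/- Let N ≥ 2 and d ≥ 2 with d < N, let p ∈ (0, ∞), and let V = {x₁,…,x_{N−d}, y₁,…,y_d}. The sample set S = {(x_i, y₁, y_j) : i ∈ [N−d], j ∈ {2,…,d}} of size (N−d)(d−1) is shattered by the class of hypotheses h_f(x,y,z) = sign(‖f(x)−f(y)‖_p − ‖f(x)−f(z)‖_p) ranging over all maps f : V → ℝ^d. -/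
open Finset

/-- The sample set `{(xᵢ, y₁, yⱼ) : i ∈ [N-d], j ∈ {2,…,d}}` is shattered by the
hypotheses `h_f(x,y,z) = sign(‖f x - f y‖_p - ‖f x - f z‖_p)` ranging over all
representations `f : V → ℝ^d`, where `V = Fin (N-d) ⊕ Fin d` (anchors on the left).
Label `true` for a triple means `‖f x - f y‖_p < ‖f x - f z‖_p`. -/
theorem stmt_10 (N d : ℕ) (hd : 2 ≤ d) (hdN : d < N) (p : ℝ) (hp : 0 < p)
    (σ : Fin (N - d) → Fin d → Bool) :
    ∃ f : (Fin (N - d) ⊕ Fin d) → (Fin d → ℝ),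
      ∀ (i : Fin (N - d)) (j : Fin d), j ≠ ⟨0, by omega⟩ →
        ((∑ t, |f (Sum.inl i) t - f (Sum.inr ⟨0, by omega⟩) t| ^ p) ^ (1 / p) <
            (∑ t, |f (Sum.inl i) t - f (Sum.inr j) t| ^ p) ^ (1 / p)
          ↔ σ i j = true) := by
  classical
  have hd0 : 0 < d := by omega
  refine ⟨fun v => Sum.elim
      (fun i t => if t = (⟨0, hd0⟩ : Fin d) then 1/4 else if σ i t then 0 else 1/2)
      (fun j t => if t = j then 1 else 0) v, ?_⟩
  intro i j hj
  simp only [Sum.elim_inl, Sum.elim_inr]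
  set j0 : Fin d := ⟨0, hd0⟩ with hj0def
  set a : ℝ := if σ i j then 0 else 1/2 with hadef
  have ha0 : 0 ≤ a := by rw [hadef]; split <;> norm_num
  have ha1 : a ≤ 1/2 := by rw [hadef]; split <;> norm_num
  set b : Fin d → ℝ := fun t => if t = j0 then 1/4 else if σ i t then 0 else 1/2 with hbdef
  have hbj : b j = a := by
    rw [hbdef, hadef]
    simp [hj]
  have hbrange : ∀ t, 0 ≤ b t ∧ b t ≤ 1/2 := by
    intro t
    rw [hbdef]
    dsimp only
    split
    · norm_num
    · split <;> norm_num
  -- key pointwise identity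
  have hpt : ∀ t : Fin d,
      |b t - (if t = j then 1 else 0)| ^ p
        = |b t - (if t = j0 then 1 else 0)| ^ p
          + ((if t = j0 then ((1/4:ℝ))^p - (3/4)^p else 0)
            + (if t = j then (1-a)^p - a^p else 0)) := by
    intro t
    by_cases ht0 : t = j0
    · have htj : t ≠ j := fun h => hj (by rw [← h, ht0])
      have hb0 : b t = 1/4 := by rw [hbdef]; simp [ht0]
      rw [if_neg htj, if_pos ht0, if_pos ht0, if_neg htj, hb0]
      have h1 : |(1/4:ℝ) - 0| = 1/4 := by norm_num
      have h2 : |(1/4:ℝ) - 1| = 3/4 := by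
        rw [abs_of_nonpos (by norm_num)]; norm_num
      rw [h1, h2]; ring
    · by_cases htj : t = j
      · subst htj
        rw [if_pos rfl, if_neg ht0, if_neg ht0, if_pos rfl, hbj]
        have h1 : |a - 1| = 1 - a := by
          rw [abs_of_nonpos (by linarith)]; ring
        have h2 : |a - 0| = a := by
          rw [sub_zero, abs_of_nonneg ha0]
        rw [h1, h2]; ring
      · rw [if_neg htj, if_neg ht0, if_neg ht0, if_neg htj]; ring
  have hsum : (∑ t, |b t - (if t = j then 1 else 0)| ^ p)
      = (∑ t, |b t - (if t = j0 then 1 else 0)| ^ p)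
        + (((1/4:ℝ))^p - (3/4)^p + ((1-a)^p - a^p)) := by
    calc (∑ t, |b t - (if t = j then 1 else 0)| ^ p)
        = ∑ t, (|b t - (if t = j0 then 1 else 0)| ^ p
          + ((if t = j0 then ((1/4:ℝ))^p - (3/4)^p else 0)
            + (if t = j then (1-a)^p - a^p else 0))) :=
          Finset.sum_congr rfl (fun t _ => hpt t)
      _ = _ := by
          rw [Finset.sum_add_distrib, Finset.sum_add_distrib]
          simp [Finset.sum_ite_eq']
  -- numeric facts
  have h34 : ((3:ℝ)/4)^p < 1 := Real.rpow_lt_one (by norm_num) (by norm_num) hp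
  have h14pos : (0:ℝ) < ((1:ℝ)/4)^p := Real.rpow_pos_of_pos (by norm_num) p
  have h1434 : ((1:ℝ)/4)^p < ((3:ℝ)/4)^p :=
    Real.rpow_lt_rpow (by norm_num) (by norm_num) hp
  have hS0 : 0 ≤ ∑ t, |b t - (if t = j0 then 1 else 0)| ^ p :=
    Finset.sum_nonneg fun t _ => Real.rpow_nonneg (abs_nonneg _) p
  have hSj : 0 ≤ ∑ t, |b t - (if t = j then 1 else 0)| ^ p :=
    Finset.sum_nonneg fun t _ => Real.rpow_nonneg (abs_nonneg _) p
  rw [Real.rpow_lt_rpow_iff hS0 hSj (by positivity)]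
  cases hσ : σ i j with
  | true =>
    have haval : a = 0 := by simp [hadef, hσ]
    have h0p : a ^ p = 0 := by rw [haval, Real.zero_rpow hp.ne']
    have h1p : ((1:ℝ) - a) ^ p = 1 := by rw [haval]; simp [Real.one_rpow]
    constructor
    · intro _; rfl
    · intro _
      rw [hsum, h0p, h1p]
      linarith
  | false =>
    have haval : a = 1/2 := by simp [hadef, hσ]
    constructor
    · intro hlt
      exfalso
      rw [hsum, haval] at hlt
      have : ((1:ℝ) - 1/2) = 1/2 := by norm_num
      rw [this] at hlt
      linarith
    · intro h; exact absurd h (by simp)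
end

section
/- Explicit witness for ℓ_p shattering: fix p > 0, d ≥ 2, and any labeling σ : {2,…,d} → {0,1} for an anchor x. Define f(y_j) = e_j (the j-th standard basis vector) for j ∈ [d], and f(x) ∈ ℝ^d with first coordinate 1/2 and j-th coordinate σ(j) for j ≥ 2 (0 elsewhere). Then for each j ∈ {2,…,d}: ‖f(x)−f(y₁)‖_p^p − ‖f(x)−f(y_j)‖_p^p < 0 if σ(j) = 0, and > 0 if σ(j) = 1. -/
open Finset

/-- Explicit witness for ℓ_p shattering: with `f(yⱼ) = eⱼ` the `j`-th standard basis
vector and `f(x)` having first coordinate `1/2` and `j`-th coordinate `σ j` for `j ≥ 2`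
(`0` elsewhere), the sign of `‖f x - f y₁‖_p^p - ‖f x - f yⱼ‖_p^p` matches `σ j`. -/
theorem stmt_11 (d : ℕ) (hd : 2 ≤ d) (p : ℝ) (hp : 0 < p) (σ : Fin d → Bool) :
    let e : Fin d → Fin d → ℝ := fun j t => if t = j then 1 else 0
    let fx : Fin d → ℝ := fun t =>
      if t = ⟨0, by omega⟩ then (1 / 2 : ℝ) else (if σ t then 1 else 0)
    ∀ j : Fin d, j ≠ ⟨0, by omega⟩ →
      ((σ j = false →
          ∑ t, |fx t - e ⟨0, by omega⟩ t| ^ p - ∑ t, |fx t - e j t| ^ p < 0) ∧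
       (σ j = true →
          ∑ t, |fx t - e ⟨0, by omega⟩ t| ^ p - ∑ t, |fx t - e j t| ^ p > 0)) := by
  intro e fx j hj
  have hp' : p ≠ 0 := ne_of_gt hp
  have key : ∑ t, |fx t - e ⟨0, by omega⟩ t| ^ p - ∑ t, |fx t - e j t| ^ p =
      (if σ j then (1 : ℝ) else 0) - (if σ j then 0 else 1) := by
    rw [← Finset.sum_sub_distrib, Finset.sum_eq_single j]
    · simp only [e, fx, if_neg hj, if_pos rfl]
      cases hσ : σ j <;>
        simp [hσ, Real.zero_rpow hp', abs_of_nonneg, abs_of_nonpos,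
          (by exact fun h => hj (h ▸ rfl) : ¬(⟨0, by omega⟩ : Fin d) = j)]
    · intro t _ ht
      simp only [e, fx, if_neg ht]
      by_cases h0 : t = (⟨0, by omega⟩ : Fin d)
      · subst h0
        have : |(2:ℝ)⁻¹ - 1| = |(2:ℝ)⁻¹| := by rw [abs_sub_comm]; norm_num
        simp [ht.symm, this]
      · simp [h0]
    · intro h; exact absurd (Finset.mem_univ j) h
  rw [key]
  constructor <;> intro hσ <;> simp [hσ] <;> norm_num
end

section
/- Upper bound on VC-dimension for arbitrary distances: consider a dataset V of size N and the hypothesis class {h_ρ : ρ a distance function on V}, where h_ρ(x,y,z) = sign(ρ(x,y) − ρ(x,z)). No set of triples of size greater than N² can be shattered by this class; hence the VC-dimension is at most N². -/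
/-!
Identify a triple `(x, y, z)` with the comparison of the two values `ρ(x, y)` and `ρ(x, z)`,
i.e. with the edge `{x, y} — {x, z}` of a graph on the at most `N²` unordered pairs. Shattering
forces distinct triples to give distinct edges and no loops, so more than `N²` shattered triples
would produce a cycle. Label `true` exactly the triples whose comparison runs forwards along the
cycle: then every step of the cycle is weakly increasing and at least one (after reversing the
cycle if necessary) strictly, so `ρ(e₀) < ρ(e₁) ≤ … ≤ ρ(e₀)`.
-/

namespace SimpleGraph

variable {V : Type*} {G : SimpleGraph V}

lemma IsAcyclic.card_edgeSet_lt [Finite V] [Nonempty V] (hG : G.IsAcyclic) :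
    Nat.card G.edgeSet < Nat.card V := by
  obtain ⟨T, hGT, -, hT⟩ := connected_top.exists_isTree_le_of_le_of_isAcyclic le_top hG
  have hle : Nat.card G.edgeSet ≤ Nat.card T.edgeSet :=
    Nat.card_mono (Set.toFinite _) (edgeSet_mono hGT)
  have hcard := (isTree_iff_connected_and_card.mp hT).2
  omega

namespace Walk

variable {β : Type*} [Preorder β] {f : V → β}

lemma le_of_forall_mem_darts_le {u w : V} (p : G.Walk u w)
    (hp : ∀ d ∈ p.darts, f d.fst ≤ f d.snd) : f u ≤ f w := by
  induction p with
  | nil => exact le_rfl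
  | cons h p ih =>
    simp only [darts_cons, List.mem_cons, forall_eq_or_imp] at hp
    exact hp.1.trans (ih hp.2)

lemma lt_of_forall_mem_darts_le {u w : V} (p : G.Walk u w)
    (hp : ∀ d ∈ p.darts, f d.fst ≤ f d.snd) {d₀ : G.Dart} (hd₀ : d₀ ∈ p.darts)
    (hlt : f d₀.fst < f d₀.snd) : f u < f w := by
  induction p with
  | nil => simp at hd₀
  | cons h p ih =>
    simp only [darts_cons, List.mem_cons, forall_eq_or_imp] at hp hd₀
    rcases hd₀ with rfl | hd₀
    · exact hlt.trans_le (p.le_of_forall_mem_darts_le hp.2)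
    · exact hp.1.trans_lt (ih hp.2 hd₀)

lemma IsTrail.symm_notMem_darts {u w : V} {p : G.Walk u w} (hp : p.IsTrail) {d : G.Dart}
    (hd : d ∈ p.darts) : d.symm ∉ p.darts := fun hd' =>
  d.symm_ne (List.inj_on_of_nodup_map hp.edges_nodup hd' hd d.edge_symm)

end Walk

end SimpleGraph

open SimpleGraph

section Comparisons

variable {Q K : Type*}

def ShatteredByComparisons (β : Type*) [LinearOrder β] (a b : Q → K) (S : Finset Q) : Prop :=
  ∀ σ : Q → Bool, ∃ v : K → β, ∀ q ∈ S, (v (a q) < v (b q) ↔ σ q = true)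

def comparisonGraph (a b : Q → K) (S : Finset Q) : SimpleGraph K :=
  fromEdgeSet ((fun q => s(a q, b q)) '' S)

variable {β : Type*} [LinearOrder β] {a b : Q → K} {S : Finset Q}

lemma exists_mem_of_mem_edgeSet_comparisonGraph {e : Sym2 K}
    (he : e ∈ (comparisonGraph a b S).edgeSet) : ∃ q ∈ S, s(a q, b q) = e := by
  rw [comparisonGraph, edgeSet_fromEdgeSet] at he
  simpa using he.1

namespace ShatteredByComparisons

variable (h : ShatteredByComparisons β a b S)
include h

lemma ne {q : Q} (hq : q ∈ S) : a q ≠ b q := fun hab => by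
  obtain ⟨v, hv⟩ := h fun _ => true
  exact lt_irrefl (v (a q)) (hab ▸ (hv q hq).mpr rfl)

lemma injOn : Set.InjOn (fun q => s(a q, b q)) S := by
  classical
  intro q hq q' hq' hqq'
  by_contra hne
  rcases Sym2.eq_iff.mp hqq' with ⟨ha, hb⟩ | ⟨ha, hb⟩
  · obtain ⟨v, hv⟩ := h fun r => decide (r = q)
    have hlt := (hv q hq).mpr (by simp)
    rw [ha, hb, hv q' hq'] at hlt
    simp [Ne.symm hne] at hlt
  · obtain ⟨v, hv⟩ := h fun _ => true
    have hlt := (hv q hq).mpr rfl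
    rw [ha, hb] at hlt
    exact lt_asymm hlt ((hv q' hq').mpr rfl)

lemma edgeSet_comparisonGraph :
    (comparisonGraph a b S).edgeSet = (fun q => s(a q, b q)) '' S := by
  refine (edgeSet_fromEdgeSet _).trans (sdiff_eq_self_iff_disjoint.mpr ?_)
  rw [Set.disjoint_right]
  rintro _ ⟨q, hq, rfl⟩
  exact Sym2.mk_isDiag_iff.not.mpr (h.ne hq)

lemma card_edgeSet_comparisonGraph : Nat.card (comparisonGraph a b S).edgeSet = S.card := by
  rw [h.edgeSet_comparisonGraph, Nat.card_image_of_injOn h.injOn, Nat.card_coe_set_eq,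
    Set.ncard_coe_finset]

lemma not_isCycle_of_forward_dart {u : K} {c : (comparisonGraph a b S).Walk u u}
    (hc : c.IsCycle) {d₀ : (comparisonGraph a b S).Dart} (hd₀ : d₀ ∈ c.darts) {q₀ : Q}
    (hq₀ : q₀ ∈ S) (hq₀d₀ : (a q₀, b q₀) = d₀.toProd) : False := by
  classical
  obtain ⟨v, hv⟩ := h fun q => decide (∃ d ∈ c.darts, d.toProd = (a q, b q))
  have hforward : ∀ d ∈ c.darts, ∀ q ∈ S, (a q, b q) = d.toProd → v d.fst < v d.snd := by
    intro d hd q hq hqd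
    rw [← hqd]
    exact (hv q hq).mpr (decide_eq_true ⟨d, hd, hqd.symm⟩)
  have hmono : ∀ d ∈ c.darts, v d.fst ≤ v d.snd := by
    intro d hd
    obtain ⟨q, hq, hqd⟩ := exists_mem_of_mem_edgeSet_comparisonGraph d.edge_mem
    rcases Sym2.eq_iff.mp hqd with ⟨ha, hb⟩ | ⟨ha, hb⟩
    · exact (hforward d hd q hq (Prod.ext ha hb)).le
    · refine le_of_not_gt fun hlt => hc.isTrail.symm_notMem_darts hd ?_
      rw [← ha, ← hb] at hlt
      obtain ⟨d', hd', hd'q⟩ := of_decide_eq_true ((hv q hq).mp hlt)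
      rw [ha, hb] at hd'q
      exact (Dart.ext _ _ hd'q : d' = d.symm) ▸ hd'
  exact lt_irrefl _ <| c.lt_of_forall_mem_darts_le hmono hd₀ (hforward d₀ hd₀ q₀ hq₀ hq₀d₀)

lemma isAcyclic_comparisonGraph : (comparisonGraph a b S).IsAcyclic := by
  intro u c hc
  obtain ⟨d, hd⟩ := List.exists_mem_of_ne_nil _ (mt Walk.darts_eq_nil.mp hc.not_nil)
  obtain ⟨q, hq, hqd⟩ := exists_mem_of_mem_edgeSet_comparisonGraph d.edge_mem
  rcases Sym2.eq_iff.mp hqd with ⟨ha, hb⟩ | ⟨ha, hb⟩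
  · exact h.not_isCycle_of_forward_dart hc hd hq (Prod.ext ha hb)
  · exact h.not_isCycle_of_forward_dart hc.reverse (d₀ := d.symm) (by simpa using hd) hq
      (Prod.ext ha hb)

lemma card_lt [Finite K] [Nonempty K] : S.card < Nat.card K :=
  h.card_edgeSet_comparisonGraph ▸ h.isAcyclic_comparisonGraph.card_edgeSet_lt

end ShatteredByComparisons

end Comparisons

/-- Upper bound for arbitrary distances: no set of more than `N²` triples over a
dataset of size `N` can be shattered by the hypotheses
`h_ρ(x,y,z) = sign (ρ x y - ρ x z)` ranging over symmetric distance functions `ρ`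
(label `true` for a triple `(x,y,z)` meaning `ρ x y < ρ x z`).  Hence the
VC-dimension of this class is at most `N²`. -/
theorem stmt_13 (N : ℕ) (S : Finset (Fin N × Fin N × Fin N)) (hS : N ^ 2 < S.card) :
    ¬ ∀ σ : (Fin N × Fin N × Fin N) → Bool,
        ∃ ρ : Fin N → Fin N → ℝ,
          (∀ a b, ρ a b = ρ b a) ∧
          ∀ q ∈ S, (ρ q.1 q.2.1 < ρ q.1 q.2.2 ↔ σ q = true) := by
  intro h
  have hshatter :
      ShatteredByComparisons ℝ (fun q => s(q.1, q.2.1)) (fun q => s(q.1, q.2.2)) S := by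
    intro σ
    obtain ⟨ρ, hsymm, hρ⟩ := h σ
    exact ⟨Sym2.lift ⟨ρ, hsymm⟩, by simpa only [Sym2.lift_mk] using hρ⟩
  obtain ⟨q, -⟩ := Finset.card_pos.mp (by omega : 0 < S.card)
  have : Nonempty (Sym2 (Fin N)) := ⟨s(q.1, q.1)⟩
  have hcard : Nat.card (Sym2 (Fin N)) ≤ N ^ 2 := by
    simpa [sq] using Nat.card_le_card_of_surjective _ (Sym2.mk_surjective (α := Fin N))
  have := hshatter.card_lt
  omega
end

section
/- Suppose two hypotheses h₁, h₂ produce labeled-sample distributions that are identical under a nasty adversary: over the three outcomes, Pr[(x₁, +)] = 1 − 2η, Pr[(x₂, +)] = η, Pr[(x₂, −)] = η, regardless of whether the target is h₁ or h₂, where h₁ and h₂ agree on x₁ and disagree on x₂ and Pr_D[h₁ ≠ h₂] = 2η. Then for any ε < 2η and δ < 1/2, no learning algorithm (as a function of the labeled sample) can output a hypothesis with error less than ε with probability at least 1 − δ for both possible targets simultaneously. -/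
open MeasureTheory

/-- Error of a hypothesis `h` against a target `t` under the two-point distribution
`D(x₁) = 1 − 2η`, `D(x₂) = 2η` (here `x₁ = false`, `x₂ = true`). -/
def twoPointErr (η : ℝ) (h t : Bool → Bool) : ℝ :=
  (if h false = t false then 0 else 1 - 2 * η) + (if h true = t true then 0 else 2 * η)

/-- If the labeled-sample distribution `μ` is identical whether the target is `h₁` or
`h₂`, where `h₁, h₂` agree on `x₁` and disagree on `x₂` and `Pr_D[h₁ ≠ h₂] = 2η`, then
for `ε < 2η` and `δ < 1/2` no algorithm `A` (a function of the sample) outputs a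
hypothesis of error `< ε` with probability `≥ 1 − δ` for both targets simultaneously. -/
theorem stmt_17 {Ω : Type*} [MeasurableSpace Ω] (μ : Measure Ω) [IsProbabilityMeasure μ]
    (η ε δ : ℝ) (hη : 0 < η) (hη' : η < 1 / 2) (hε : ε < 2 * η) (hδ : δ < 1 / 2)
    (h₁ h₂ : Bool → Bool) (hagree : h₁ false = h₂ false) (hdis : h₁ true ≠ h₂ true)
    (A : Ω → (Bool → Bool))
    (hmeas : ∀ t, MeasurableSet {ω | twoPointErr η (A ω) t < ε}) :
    ¬ ((1 - δ ≤ (μ {ω | twoPointErr η (A ω) h₁ < ε}).toReal) ∧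
       (1 - δ ≤ (μ {ω | twoPointErr η (A ω) h₂ < ε}).toReal)) := by
  rintro ⟨H1, H2⟩
  set S₁ := {ω | twoPointErr η (A ω) h₁ < ε}
  set S₂ := {ω | twoPointErr η (A ω) h₂ < ε}
  have hdisj : Disjoint S₁ S₂ := by
    rw [Set.disjoint_left]
    intro ω hω1 hω2
    have key : ∀ t : Bool → Bool, A ω true ≠ t true → ¬ (twoPointErr η (A ω) t < ε) := by
      intro t ht
      unfold twoPointErr
      rw [if_neg ht]
      have : (0:ℝ) ≤ if A ω false = t false then 0 else 1 - 2 * η := by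
        split <;> linarith
      push_neg
      linarith
    by_cases hc : A ω true = h₁ true
    · exact key h₂ (by rw [hc]; exact hdis) hω2
    · exact key h₁ hc hω1
  have hunion : μ S₁ + μ S₂ = μ (S₁ ∪ S₂) := (measure_union hdisj (hmeas h₂)).symm
  have hle : μ (S₁ ∪ S₂) ≤ 1 := prob_le_one
  have h1ne : μ S₁ ≠ ⊤ := measure_ne_top μ _
  have h2ne : μ S₂ ≠ ⊤ := measure_ne_top μ _
  have : (μ S₁).toReal + (μ S₂).toReal ≤ 1 := by
    rw [← ENNReal.toReal_add h1ne h2ne, hunion]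
    have := ENNReal.toReal_mono (by norm_num) hle
    simpa using this
  linarith
end
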